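/- Let d ≥ 1, let M be a symmetric positive definite d×d real matrix, let γ > 0 be a scalar, let Σ be a constant d×d real matrix, and let V : ℝ^d → ℝ be C². Let L be the generator of the kinetic Langevin dynamics dq = M⁻¹p dt, dp = (−∇V(q) − γ M⁻¹p) dt + √2 Σ dW_t, i.e. (Lf)(q,p) = (M⁻¹p)·∇_q f(q,p) + (−∇V(q) − γ M⁻¹p)·∇_p f(q,p) + Σ_{i,j} (ΣΣᵀ)_{ij} ∂²f/∂p_i∂p_j (q,p), and let H(q,p) = ½ pᵀM⁻¹p + V(q). Suppose π is a probability measure on ℝ^d × ℝ^d under which the functions (q,p) ↦ pᵀM⁻²p and (q,p) ↦ ∇V(q)·(M⁻¹p) are integrable and which is stationary in the sense that ∫ (LH) dπ = 0. Then Tr((ΣΣᵀ)M⁻¹) = γ ∫ pᵀM⁻²p dπ(q,p). -/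
import Mathlib


open Matrix MeasureTheory

/-- Gradient of `V : ℝ^d → ℝ` as a vector of partial derivatives. -/
noncomputable def gradVec {d : ℕ} (V : (Fin d → ℝ) → ℝ) (q : Fin d → ℝ) : Fin d → ℝ :=
  fun i => fderiv ℝ V q (Pi.single i 1)

/-- Generator of kinetic Langevin dynamics
`dq = M⁻¹ p dt, dp = (−∇V(q) − γ M⁻¹ p) dt + √2 Σ dW_t` acting on a
function `f(q,p)`:
`(Lf)(q,p) = (M⁻¹p)·∇_q f + (−∇V(q) − γM⁻¹p)·∇_p f + Σ_{i,j} (ΣΣᵀ)_{ij} ∂²f/∂p_i∂p_j`. -/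
noncomputable def langevinGen {d : ℕ} (M S : Matrix (Fin d) (Fin d) ℝ) (γ : ℝ)
    (V : (Fin d → ℝ) → ℝ) (f : (Fin d → ℝ) → (Fin d → ℝ) → ℝ)
    (q p : Fin d → ℝ) : ℝ :=
  fderiv ℝ (fun q' => f q' p) q (M⁻¹ *ᵥ p)
  + fderiv ℝ (fun p' => f q p') p (-(gradVec V q) - γ • (M⁻¹ *ᵥ p))
  + ∑ i, ∑ j, (S * Sᵀ) i j *
      fderiv ℝ (fun p' => fderiv ℝ (fun p'' => f q p'') p' (Pi.single i 1)) p (Pi.single j 1)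

/-- The bilinear map `(x, y) ↦ x ⬝ᵥ A *ᵥ y` as a continuous linear map. -/
noncomputable def dpBilin {d : ℕ} (A : Matrix (Fin d) (Fin d) ℝ) :
    (Fin d → ℝ) →L[ℝ] (Fin d → ℝ) →L[ℝ] ℝ :=
  LinearMap.toContinuousLinearMap
  { toFun := fun x => LinearMap.toContinuousLinearMap
      { toFun := fun y => x ⬝ᵥ A *ᵥ y
        map_add' := fun y z => by simp [Matrix.mulVec_add, dotProduct_add]
        map_smul' := fun c y => by simp [Matrix.mulVec_smul, dotProduct_smul] }
    map_add' := fun x z => by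
      apply ContinuousLinearMap.ext; intro y
      simp [add_dotProduct]
    map_smul' := fun c x => by
      apply ContinuousLinearMap.ext; intro y
      simp [smul_dotProduct] }

@[simp] lemma dpBilin_apply {d : ℕ} (A : Matrix (Fin d) (Fin d) ℝ) (x y : Fin d → ℝ) :
    dpBilin A x y = x ⬝ᵥ A *ᵥ y := rfl

lemma hasFDerivAt_quad {d : ℕ} (A : Matrix (Fin d) (Fin d) ℝ) (p : Fin d → ℝ) :
    HasFDerivAt (fun p' : Fin d → ℝ => p' ⬝ᵥ A *ᵥ p')
      ((dpBilin A).precompR _ p (ContinuousLinearMap.id ℝ _)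
        + (dpBilin A).precompL _ (ContinuousLinearMap.id ℝ _) p) p :=
  (dpBilin A).hasFDerivAt_of_bilinear (hasFDerivAt_id p) (hasFDerivAt_id p)

lemma quadDeriv_apply {d : ℕ} (A : Matrix (Fin d) (Fin d) ℝ) (p v : Fin d → ℝ) :
    ((dpBilin A).precompR _ p (ContinuousLinearMap.id ℝ _)
        + (dpBilin A).precompL _ (ContinuousLinearMap.id ℝ _) p) v
      = p ⬝ᵥ A *ᵥ v + v ⬝ᵥ A *ᵥ p := by
  simp [ContinuousLinearMap.precompR, ContinuousLinearMap.precompL]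

lemma hasFDerivAt_halfquad {d : ℕ} (A : Matrix (Fin d) (Fin d) ℝ) (c : ℝ) (p : Fin d → ℝ) :
    HasFDerivAt (fun p' : Fin d → ℝ => (1/2) * (p' ⬝ᵥ A *ᵥ p') + c)
      ((1/2 : ℝ) • ((dpBilin A).precompR _ p (ContinuousLinearMap.id ℝ _)
        + (dpBilin A).precompL _ (ContinuousLinearMap.id ℝ _) p)) p :=
  ((hasFDerivAt_quad A p).const_mul (1/2)).add_const c

lemma fderiv_halfquad {d : ℕ} (A : Matrix (Fin d) (Fin d) ℝ) (c : ℝ) (p v : Fin d → ℝ) :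
    fderiv ℝ (fun p' : Fin d → ℝ => (1/2) * (p' ⬝ᵥ A *ᵥ p') + c) p v
      = (1/2) * (p ⬝ᵥ A *ᵥ v + v ⬝ᵥ A *ᵥ p) := by
  rw [(hasFDerivAt_halfquad A c p).fderiv]
  simp [quadDeriv_apply, smul_eq_mul]
  ring

lemma fderiv_apply_eq_grad {d : ℕ} {V : (Fin d → ℝ) → ℝ} {q : Fin d → ℝ}
    (hV : DifferentiableAt ℝ V q) (v : Fin d → ℝ) :
    fderiv ℝ V q v = gradVec V q ⬝ᵥ v := by
  have hv : v = ∑ i, v i • (Pi.single i (1 : ℝ) : Fin d → ℝ) := by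
    conv_lhs => rw [pi_eq_sum_univ v]
    refine Finset.sum_congr rfl fun i _ => ?_
    funext j
    simp [Pi.single_apply, eq_comm]
  conv_lhs => rw [hv]
  rw [map_sum]
  simp only [_root_.map_smul, smul_eq_mul]
  simp [gradVec, dotProduct, mul_comm]

/-- **Theorem 3.1** (covariance estimation identity): if `π` is a probability measure that is
stationary for the Hamiltonian observable `H(q,p) = ½ pᵀM⁻¹p + V(q)` (i.e. `∫ LH dπ = 0`),
under which `pᵀM⁻²p` and `∇V(q)·(M⁻¹p)` are integrable, then
`Tr((ΣΣᵀ)M⁻¹) = γ ∫ pᵀM⁻²p dπ`. -/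
theorem covariance_estimation_identity {d : ℕ} (hd : 1 ≤ d)
    (M S : Matrix (Fin d) (Fin d) ℝ) (hMsymm : M.IsSymm) (hMpd : M.PosDef)
    (γ : ℝ) (hγ : 0 < γ) (V : (Fin d → ℝ) → ℝ) (hV : ContDiff ℝ 2 V)
    (π : Measure ((Fin d → ℝ) × (Fin d → ℝ))) [IsProbabilityMeasure π]
    (hInt₁ : Integrable (fun x => x.2 ⬝ᵥ ((M⁻¹ * M⁻¹) *ᵥ x.2)) π)
    (hInt₂ : Integrable (fun x => (gradVec V x.1) ⬝ᵥ (M⁻¹ *ᵥ x.2)) π)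
    (hStat : ∫ x, langevinGen M S γ V
        (fun q' p' => (1/2) * (p' ⬝ᵥ (M⁻¹ *ᵥ p')) + V q') x.1 x.2 ∂π = 0) :
    Matrix.trace ((S * Sᵀ) * M⁻¹) = γ * ∫ x, x.2 ⬝ᵥ ((M⁻¹ * M⁻¹) *ᵥ x.2) ∂π := by
  set A := M⁻¹ with hA
  have hAsymm : Aᵀ = A := by
    rw [hA, Matrix.transpose_nonsing_inv, hMsymm.eq]
  -- symmetry of the quadratic form
  have hsymm : ∀ x y : Fin d → ℝ, x ⬝ᵥ A *ᵥ y = y ⬝ᵥ A *ᵥ x := by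
    intro x y
    rw [Matrix.dotProduct_mulVec, ← Matrix.mulVec_transpose, hAsymm, dotProduct_comm]
  -- pointwise computation of the generator applied to the Hamiltonian
  have hpt : ∀ q p : Fin d → ℝ,
      langevinGen M S γ V (fun q' p' => (1/2) * (p' ⬝ᵥ (A *ᵥ p')) + V q') q p
        = Matrix.trace ((S * Sᵀ) * A) - γ * (p ⬝ᵥ ((A * A) *ᵥ p)) := by
    intro q p
    have hVdiff : DifferentiableAt ℝ V q :=
      (hV.differentiable (by norm_num)).differentiableAt
    unfold langevinGen
    -- first term
    have h1 : fderiv ℝ (fun q' => (1/2) * (p ⬝ᵥ (A *ᵥ p)) + V q') q (A *ᵥ p)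
        = gradVec V q ⬝ᵥ (A *ᵥ p) := by
      rw [fderiv_const_add, fderiv_apply_eq_grad hVdiff]
    -- second term
    have h2 : fderiv ℝ (fun p' => (1/2) * (p' ⬝ᵥ (A *ᵥ p')) + V q) p
          (-(gradVec V q) - γ • (A *ᵥ p))
        = -(gradVec V q ⬝ᵥ (A *ᵥ p)) - γ * (p ⬝ᵥ ((A * A) *ᵥ p)) := by
      rw [fderiv_halfquad]
      rw [hsymm p (-(gradVec V q) - γ • (A *ᵥ p))]
      rw [show ((-(gradVec V q) - γ • (A *ᵥ p)) ⬝ᵥ A *ᵥ p)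
          = -(gradVec V q ⬝ᵥ (A *ᵥ p)) - γ * ((A *ᵥ p) ⬝ᵥ (A *ᵥ p)) by
        rw [sub_dotProduct, neg_dotProduct, smul_dotProduct, smul_eq_mul]]
      have : (A *ᵥ p) ⬝ᵥ (A *ᵥ p) = p ⬝ᵥ ((A * A) *ᵥ p) := by
        rw [hsymm (A *ᵥ p) p, Matrix.mulVec_mulVec]
      rw [this]; ring
    rw [h1, h2]
    -- third term
    have h3 : ∀ i j : Fin d,
        fderiv ℝ (fun p' => fderiv ℝ (fun p'' => (1/2) * (p'' ⬝ᵥ (A *ᵥ p'')) + V q) p'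
            (Pi.single i 1)) p (Pi.single j 1) = A i j := by
      intro i j
      have hfun : (fun p' => fderiv ℝ (fun p'' => (1/2) * (p'' ⬝ᵥ (A *ᵥ p'')) + V q) p'
            (Pi.single i 1))
          = fun p' => ((1/2 : ℝ) • ((dpBilin A).flip (Pi.single i 1)
              + dpBilin A (Pi.single i 1))) p' := by
        funext p'
        rw [fderiv_halfquad]
        simp [smul_eq_mul]
        ring
      rw [hfun, ContinuousLinearMap.fderiv]
      have hAs : A.IsSymm := hAsymm
      have hij : A j i = A i j := hAs.apply i j
      simp [single_dotProduct, Matrix.mulVec_single, dotProduct_single, smul_eq_mul]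
      rw [hij]
      ring
    have h3sum : (∑ i, ∑ j, (S * Sᵀ) i j *
        fderiv ℝ (fun p' => fderiv ℝ (fun p'' => (1/2) * (p'' ⬝ᵥ (A *ᵥ p'')) + V q) p'
            (Pi.single i 1)) p (Pi.single j 1)) = Matrix.trace ((S * Sᵀ) * A) := by
      have hAs : A.IsSymm := hAsymm
      simp only [h3]
      rw [Matrix.trace]
      simp only [Matrix.diag_apply, Matrix.mul_apply]
      refine Finset.sum_congr rfl fun i _ => Finset.sum_congr rfl fun j _ => ?_
      rw [← hAs.apply i j]
    rw [h3sum]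
    ring
  -- integrate
  have hInt' : Integrable (fun x : (Fin d → ℝ) × (Fin d → ℝ) =>
      γ * (x.2 ⬝ᵥ ((A * A) *ᵥ x.2))) π := hInt₁.const_mul γ
  have := hStat
  rw [show (fun x : (Fin d → ℝ) × (Fin d → ℝ) => langevinGen M S γ V
        (fun q' p' => (1/2) * (p' ⬝ᵥ (M⁻¹ *ᵥ p')) + V q') x.1 x.2)
      = fun x => Matrix.trace ((S * Sᵀ) * A) - γ * (x.2 ⬝ᵥ ((A * A) *ᵥ x.2)) from
    funext fun x => hpt x.1 x.2] at this
  rw [integral_sub (integrable_const _) hInt', integral_const, integral_const_mul] at this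
  simp [measure_univ] at this
  linarith
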